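/- arXiv:2103.11839 — 2 statements merged into one kernel-verified Lean document; each statement's English description precedes it below -/
import Mathlib

section
/- Let p ≥ 1 and m ≥ 0 be integers and let x be a real number with 0 ≤ x < 1. Then ∫₀ˣ t^m Li_p(t) dt = Σ_{j=2}^{p} ((−1)^{p−j}/(m+1)^{p+1−j})·x^{m+1}·Li_j(x) + ((−1)^{p−1}/(m+1)^{p−1})·( Σ_{j=0}^{m} C(m,j)·(−1)^j/(j+1)^2 + Σ_{j=0}^{m} C(m,j)·(−1)^j·((1−x)^{j+1}/(j+1))·Σ_{i=0}^{1} ((2−i)_i/(j+1)^i)·(−1)^i·log^{1−i}(1−x) ), where C(m,j) is a binomial coefficient. -/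
/-!
Expanding `Li p` termwise, `∫₀ˣ t^m Li_p(t) dt = ∑ₙ x^(m+n+2) / ((m+n+2)(n+1)^p)`. The partial
fraction `1/((m+n+2)(n+1)) = (1/(m+1)) (1/(n+1) - 1/(m+n+2))` turns this into the recurrence
`I_{p+1} = x^(m+1) Li_{p+1}(x)/(m+1) - I_p/(m+1)` (integration by parts, seen on the series),
which unrolls down to `I_1`. There `Li_1(t) = -log(1-t)`, and writing `t^m = (1-(1-t))^m`
reduces `I_1` to the elementary integrals of `(1-t)^j log(1-t)`.
-/

/-- `Li p x = ∑_{n≥1} x^n / n^p`, the polylogarithm. -/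
noncomputable def Li (p : ℕ) (x : ℝ) : ℝ := ∑' n : ℕ, x ^ (n + 1) / (n + 1 : ℝ) ^ p

/-- Pochhammer symbol `(t)_k = t(t+1)⋯(t+k-1)`. -/
noncomputable def poch (t : ℝ) (k : ℕ) : ℝ := ∏ i ∈ Finset.range k, (t + i)

open Finset MeasureTheory Real

lemma abs_le_abs_of_mem_uIcc_zero {x t : ℝ} (ht : t ∈ Set.uIcc 0 x) : |t| ≤ |x| := by
  simpa using Set.abs_sub_left_of_mem_uIcc ht

lemma norm_pow_succ_div_pow_le (p n : ℕ) (x : ℝ) :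
    ‖x ^ (n + 1) / ((n : ℝ) + 1) ^ p‖ ≤ |x| ^ (n + 1) := by
  simp only [norm_div, norm_pow, Real.norm_eq_abs]
  exact div_le_self (by positivity)
    (one_le_pow₀ ((le_add_of_nonneg_left n.cast_nonneg).trans (le_abs_self _)))

lemma hasSum_Li (p : ℕ) {x : ℝ} (hx : |x| < 1) :
    HasSum (fun n : ℕ => x ^ (n + 1) / ((n : ℝ) + 1) ^ p) (Li p x) := by
  refine (Summable.of_norm_bounded ((summable_geometric_of_lt_one (abs_nonneg x) hx).mul_left |x|)
    fun n => ?_).hasSum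
  simpa [pow_succ'] using norm_pow_succ_div_pow_le p n x

lemma Li_one {x : ℝ} (hx : |x| < 1) : Li 1 x = -log (1 - x) :=
  (hasSum_Li 1 hx).unique (by simpa using Real.hasSum_pow_div_log_of_abs_lt_one hx)

lemma integral_pow_mul_pow_succ_div_pow (m n p : ℕ) (x : ℝ) :
    ∫ t in (0:ℝ)..x, t ^ m * (t ^ (n + 1) / ((n : ℝ) + 1) ^ p)
      = x ^ (m + n + 2) / (((m : ℝ) + n + 2) * ((n : ℝ) + 1) ^ p) := by
  have h : ∀ t : ℝ, t ^ m * (t ^ (n + 1) / ((n : ℝ) + 1) ^ p)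
      = (((n : ℝ) + 1) ^ p)⁻¹ * t ^ (m + n + 1) := fun t => by rw [pow_add]; ring
  simp_rw [h, intervalIntegral.integral_const_mul, integral_pow]
  push_cast
  field_simp
  ring

lemma hasSum_integral_pow_mul_Li (m p : ℕ) {x : ℝ} (hx : |x| < 1) :
    HasSum (fun n : ℕ => x ^ (m + n + 2) / (((m : ℝ) + n + 2) * ((n : ℝ) + 1) ^ p))
      (∫ t in (0:ℝ)..x, t ^ m * Li p t) := by
  simp_rw [← integral_pow_mul_pow_succ_div_pow]
  refine intervalIntegral.hasSum_integral_of_dominated_convergence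
    (fun n _ => |x| ^ (m + 1) * |x| ^ n) (fun n => by fun_prop) (fun n => ?_)
    (.of_forall fun t _ => (summable_geometric_of_lt_one (abs_nonneg x) hx).mul_left _)
    (by simp) ?_
  · refine .of_forall fun t ht => ?_
    have ht' : |t| ≤ |x| := abs_le_abs_of_mem_uIcc_zero (Set.uIoc_subset_uIcc ht)
    calc ‖t ^ m * (t ^ (n + 1) / ((n : ℝ) + 1) ^ p)‖
        ≤ |t| ^ m * |t| ^ (n + 1) := by
          rw [norm_mul, norm_pow, Real.norm_eq_abs]
          gcongr
          exact norm_pow_succ_div_pow_le p n t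
      _ ≤ |x| ^ m * |x| ^ (n + 1) := by gcongr
      _ = |x| ^ (m + 1) * |x| ^ n := by ring
  · refine .of_forall fun t ht => (hasSum_Li p ?_).mul_left (t ^ m)
    exact (abs_le_abs_of_mem_uIcc_zero (Set.uIoc_subset_uIcc ht)).trans_lt hx

lemma integral_pow_mul_Li_succ (m p : ℕ) {x : ℝ} (hx : |x| < 1) :
    ∫ t in (0:ℝ)..x, t ^ m * Li (p + 1) t
      = x ^ (m + 1) / ((m : ℝ) + 1) * Li (p + 1) x
        - (∫ t in (0:ℝ)..x, t ^ m * Li p t) / ((m : ℝ) + 1) := by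
  refine (hasSum_integral_pow_mul_Li m (p + 1) hx).unique
    ((((hasSum_Li (p + 1) hx).mul_left (x ^ (m + 1) / ((m : ℝ) + 1))).sub
      ((hasSum_integral_pow_mul_Li m p hx).div_const ((m : ℝ) + 1))).congr_fun fun n => ?_)
  rw [show m + n + 2 = (m + 1) + (n + 1) by ring, pow_add]
  field_simp
  ring

lemma eq_sum_Icc_of_eq_add_mul {R : Type*} [CommSemiring R] {a b : ℕ → R} {c : R}
    (h : ∀ p ≥ 1, a (p + 1) = b (p + 1) + c * a p) {p : ℕ} (hp : 1 ≤ p) :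
    a p = ∑ j ∈ Icc 2 p, c ^ (p - j) * b j + c ^ (p - 1) * a 1 := by
  induction p, hp using Nat.le_induction with
  | base => simp
  | succ p hp ih =>
    rw [h p hp, ih, sum_Icc_succ_top (by omega), mul_add, mul_sum, Nat.sub_self, pow_zero,
      one_mul, ← mul_assoc, ← pow_succ', show p - 1 + 1 = p + 1 - 1 by omega]
    have hpow : ∀ j ∈ Icc 2 p, c * (c ^ (p - j) * b j) = c ^ (p + 1 - j) * b j := fun j hj => by
      rw [← mul_assoc, ← pow_succ', show p - j + 1 = p + 1 - j by have := (mem_Icc.1 hj).2; omega]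
    rw [sum_congr rfl hpow]
    ring

lemma intervalIntegrable_one_sub_pow_mul_neg_log (j : ℕ) {x : ℝ} (hx : x < 1) :
    IntervalIntegrable (fun t => (1 - t) ^ j * -log (1 - t)) volume 0 x :=
  (ContinuousOn.mul (by fun_prop) (ContinuousOn.log (by fun_prop) fun t ht =>
    sub_ne_zero.2 (ht.2.trans_lt (max_lt one_pos hx)).ne').neg).intervalIntegrable

lemma integral_one_sub_pow_mul_neg_log (j : ℕ) {x : ℝ} (hx : x < 1) :
    ∫ t in (0:ℝ)..x, (1 - t) ^ j * -log (1 - t)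
      = 1 / ((j : ℝ) + 1) ^ 2
        + (1 - x) ^ (j + 1) / ((j : ℝ) + 1) * (log (1 - x) - 1 / ((j : ℝ) + 1)) := by
  have hj : (j : ℝ) + 1 ≠ 0 := by positivity
  have hderiv : ∀ t ∈ Set.uIcc 0 x, HasDerivAt
      (fun t => (1 - t) ^ (j + 1) / ((j : ℝ) + 1) * (log (1 - t) - 1 / ((j : ℝ) + 1)))
      ((1 - t) ^ j * -log (1 - t)) t := fun t ht => by
    have h1t : 1 - t ≠ 0 := sub_ne_zero.2 (ht.2.trans_lt (max_lt one_pos hx)).ne'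
    have hsub : HasDerivAt (fun t : ℝ => 1 - t) (-1) t := by
      simpa using (hasDerivAt_id t).const_sub 1
    refine (((hsub.fun_pow (j + 1)).div_const ((j : ℝ) + 1)).fun_mul
      ((hsub.log h1t).sub_const (1 / ((j : ℝ) + 1)))).congr_deriv ?_
    field_simp
    push_cast
    ring
  rw [intervalIntegral.integral_eq_sub_of_hasDerivAt hderiv
    (intervalIntegrable_one_sub_pow_mul_neg_log j hx)]
  simp only [sub_zero, one_pow, log_one]
  field_simp
  ring

lemma pow_eq_sum_choose_mul_one_sub_pow (m : ℕ) (t : ℝ) :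
    t ^ m = ∑ j ∈ range (m + 1), (m.choose j : ℝ) * (-1) ^ j * (1 - t) ^ j := by
  rw [show t = -(1 - t) + 1 by ring, add_pow]
  refine sum_congr rfl fun j _ => ?_
  rw [neg_pow, one_pow, mul_one]
  ring

lemma sum_range_two_poch (c y : ℝ) :
    ∑ i ∈ range 2, poch (2 - (i : ℝ)) i / c ^ i * (-1) ^ i * y ^ (1 - i) = y - 1 / c := by
  norm_num [sum_range_succ, poch, sub_eq_add_neg]

lemma integral_pow_mul_Li_one (m : ℕ) {x : ℝ} (hx : |x| < 1) :
    ∫ t in (0:ℝ)..x, t ^ m * Li 1 t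
      = ∑ j ∈ range (m + 1), (m.choose j : ℝ) * (-1) ^ j * (1 / ((j : ℝ) + 1) ^ 2
          + (1 - x) ^ (j + 1) / ((j : ℝ) + 1) * (log (1 - x) - 1 / ((j : ℝ) + 1))) := by
  have hexpand : Set.EqOn (fun t => t ^ m * Li 1 t) (fun t => ∑ j ∈ range (m + 1),
      (m.choose j : ℝ) * (-1) ^ j * ((1 - t) ^ j * -log (1 - t))) (Set.uIcc 0 x) := fun t ht => by
    simp only [Li_one ((abs_le_abs_of_mem_uIcc_zero ht).trans_lt hx),
      pow_eq_sum_choose_mul_one_sub_pow m t, sum_mul, mul_assoc]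
  rw [intervalIntegral.integral_congr hexpand, intervalIntegral.integral_finsetSum]
  · simp only [intervalIntegral.integral_const_mul,
      integral_one_sub_pow_mul_neg_log _ (lt_of_abs_lt hx)]
  · exact fun j _ => (intervalIntegrable_one_sub_pow_mul_neg_log j (lt_of_abs_lt hx)).const_mul _

theorem stmt9 (p m : ℕ) (hp : 1 ≤ p) (x : ℝ) (hx0 : 0 ≤ x) (hx1 : x < 1) :
    (∫ t in (0:ℝ)..x, t ^ m * Li p t) =
      (∑ j ∈ Finset.Icc 2 p, ((-1 : ℝ) ^ (p - j) / ((m : ℝ) + 1) ^ (p + 1 - j))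
        * x ^ (m + 1) * Li j x)
      + ((-1 : ℝ) ^ (p - 1) / ((m : ℝ) + 1) ^ (p - 1))
        * ((∑ j ∈ Finset.range (m + 1), (m.choose j : ℝ) * (-1 : ℝ) ^ j / ((j : ℝ) + 1) ^ 2)
          + ∑ j ∈ Finset.range (m + 1), (m.choose j : ℝ) * (-1 : ℝ) ^ j
              * ((1 - x) ^ (j + 1) / ((j : ℝ) + 1))
              * ∑ i ∈ Finset.range 2, (poch (2 - (i : ℝ)) i / ((j : ℝ) + 1) ^ i)
                  * (-1 : ℝ) ^ i * (Real.log (1 - x)) ^ (1 - i)) := by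
  have hx : |x| < 1 := abs_lt.2 ⟨by linarith, hx1⟩
  rw [eq_sum_Icc_of_eq_add_mul (a := fun p => ∫ t in (0:ℝ)..x, t ^ m * Li p t)
      (b := fun j => x ^ (m + 1) / ((m : ℝ) + 1) * Li j x) (c := -1 / ((m : ℝ) + 1))
      (fun p _ => by rw [integral_pow_mul_Li_succ m p hx]; ring) hp,
    integral_pow_mul_Li_one m hx, div_pow, ← sum_add_distrib]
  congr 1
  · refine sum_congr rfl fun j hj => ?_
    rw [show p + 1 - j = p - j + 1 by have := (mem_Icc.1 hj).2; omega, div_pow, pow_succ]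
    field_simp
    ring
  · simp only [sum_range_two_poch]
    congr 1
    refine sum_congr rfl fun j _ => ?_
    ring
end

section
/- Let p, q, m be positive integers with p ≥ q. Write K(r,s,t) := ∫₀¹ log^r(x)·Li_s(x)·Li_t(x)/x dx, where Li_0(x) = x/(1−x). Then K(m,p,q) = Σ_{x=1}^{q} K(m+p+x−1, 0, q−x+1)·((−1)^{p+x−1}/(m+1)_{p+x−1})·N_{x−1} + Σ_{i_1=1}^{p} ((−1)^{i_1}/(m+1)_{i_1}) Σ_{i_2=1}^{p−i_1+1} ((−1)^{i_2}/(m+i_1+1)_{i_2}) ⋯ Σ_{i_q=1}^{p−i_1−⋯−i_{q−1}+q−1} ((−1)^{i_q}/(m+i_1+⋯+i_{q−1}+1)_{i_q})·K(m+i_1+⋯+i_q, p−i_1−⋯−i_q+q, 0), where N_{x−1} := Σ_{i_1=1}^{p} Σ_{i_2=1}^{p−i_1+1} ⋯ Σ_{i_{x−1}=1}^{p−i_1−⋯−i_{x−2}+x−2} 1 is the number of (x−1)-tuples of positive integers (i_1,…,i_{x−1}) with i_1+⋯+i_j ≤ p+j−1 for every j (N_0 := 1), the nested sums run over all tuples of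 positive integers whose partial sums satisfy the indicated upper bounds, and (t)_k := t(t+1)⋯(t+k−1) is the Pochhammer symbol. -/
/-- `K r s t = ∫₀¹ log^r(x) · Li_s(x) · Li_t(x) / x dx`. -/
noncomputable def Kint (r s t : ℕ) : ℝ :=
  ∫ x in (0:ℝ)..1, (Real.log x) ^ r * Li s x * Li t x / x

/-- `nest19 y b c f` is the nested sum
`Σ_{i=1}^{b} ((-1)^i/(c+1)_i) · nest19 (y-1) (b-i+1) (c+i) f`, with `nest19 0 b c f = f c`.
With `b = p` and `c = m` this is the nested sum
`Σ_{i_1=1}^{p} ((-1)^{i_1}/(m+1)_{i_1}) Σ_{i_2=1}^{p-i_1+1} ((-1)^{i_2}/(m+i_1+1)_{i_2}) ⋯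
f (m+i_1+⋯+i_y)` over `y`-tuples of positive integers whose partial sums satisfy
`i_1+⋯+i_j ≤ p+j-1`. -/
noncomputable def nest19 : ℕ → ℕ → ℕ → (ℕ → ℝ) → ℝ
  | 0, _, c, f => f c
  | y + 1, b, c, f => ∑ i ∈ Finset.Icc 1 b,
      ((-1 : ℝ) ^ i / poch ((c : ℝ) + 1) i) * nest19 y (b - i + 1) (c + i) f

/-- `cnt19 y b` is the number of `y`-tuples of positive integers `(i_1, …, i_y)` whose partial
sums satisfy the bounds `i_1 ≤ b`, `i_2 ≤ b - i_1 + 1`, …; `cnt19 0 b = 1` (the empty tuple). -/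
def cnt19 : ℕ → ℕ → ℕ
  | 0, _ => 1
  | y + 1, b => ∑ i ∈ Finset.Icc 1 b, cnt19 y (b - i + 1)

/-!
Expanding `Li s · Li t` as a double power series and integrating termwise against
`log x ^ r / x` gives `K(r,s,t) = (-1)^r r! T(s,t,r+1)`, where
`T(s,t,u) = ∑_{n,k ≥ 1} n^{-s} k^{-t} (n+k)^{-u}` is Tornheim's double series.
The partial fraction `1/(nk) = (1/n + 1/k)/(n+k)` gives the recurrence
`T(s+1,t+1,u) = T(s,t+1,u+1) + T(s+1,t,u+1)`. Unfolding it first in `s` down to `s = 0` and then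
recursively in `t` expresses `T(p,q,m+1)` as a sum over the tuples `(i_1, …, i_x)` of the
statement, with every coefficient `1`. In the normalization of `K` the factor `(-1)^c c!` turns
into the weights `(-1)^i/(c+1)_i`, since `c! (c+1)_i = (c+i)!`.
-/

open MeasureTheory Real Set
open scoped Nat

lemma image_exp_neg_Ioi : (fun t : ℝ => exp (-t)) '' Ioi 0 = Ioo 0 1 := by
  ext x
  constructor
  · rintro ⟨t, ht, rfl⟩
    exact ⟨exp_pos _, exp_lt_one_iff.mpr (neg_neg_of_pos ht)⟩
  · rintro ⟨hx0, hx1⟩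
    exact ⟨-log x, neg_pos.mpr (log_neg hx0 hx1), by simp [exp_log hx0]⟩

lemma integral_Ioo_zero_one_eq_integral_Ioi_exp_neg (g : ℝ → ℝ) :
    ∫ x in Ioo (0:ℝ) 1, g x = ∫ t in Ioi (0:ℝ), exp (-t) * g (exp (-t)) := by
  rw [← image_exp_neg_Ioi, integral_image_eq_integral_abs_deriv_smul measurableSet_Ioi
    (fun t _ => (hasDerivAt_neg t).exp.hasDerivWithinAt)
    (fun a _ b _ h => neg_injective (exp_injective h))]
  simp [abs_of_pos (exp_pos _)]

lemma integral_neg_log_pow_mul_pow (r b : ℕ) :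
    ∫ x in Ioo (0:ℝ) 1, (-log x) ^ r * x ^ b = r ! / ((b:ℝ) + 1) ^ (r + 1) := by
  have hGamma := integral_rpow_mul_exp_neg_mul_Ioi (a := (r:ℝ) + 1) (r := (b:ℝ) + 1)
    (by positivity) (by positivity)
  rw [add_sub_cancel_right, Gamma_nat_eq_factorial, ← Nat.cast_succ r, rpow_natCast, one_div,
    inv_pow, inv_mul_eq_div] at hGamma
  rw [integral_Ioo_zero_one_eq_integral_Ioi_exp_neg, ← hGamma]
  refine setIntegral_congr_fun measurableSet_Ioi fun t _ => ?_
  rw [log_exp, neg_neg, rpow_natCast, ← exp_nat_mul, mul_left_comm, ← exp_add]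
  ring_nf

lemma integral_log_pow_mul_pow (r b : ℕ) :
    ∫ x in Ioo (0:ℝ) 1, log x ^ r * x ^ b = (-1) ^ r * (r ! / ((b:ℝ) + 1) ^ (r + 1)) := by
  rw [← integral_neg_log_pow_mul_pow, ← integral_const_mul]
  congr with x
  rw [← mul_assoc, ← mul_pow, neg_one_mul, neg_neg]

lemma integrableOn_log_pow_mul_pow (r b : ℕ) :
    IntegrableOn (fun x : ℝ => log x ^ r * x ^ b) (Ioo 0 1) :=
  Integrable.of_integral_ne_zero (by rw [integral_log_pow_mul_pow]; positivity)

noncomputable def tornheimTerm (s t u : ℕ) (nk : ℕ × ℕ) : ℝ :=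
  (((nk.1:ℝ) + 1) ^ s * ((nk.2:ℝ) + 1) ^ t * ((nk.1:ℝ) + nk.2 + 2) ^ u)⁻¹

noncomputable def tornheim (s t u : ℕ) : ℝ := ∑' nk, tornheimTerm s t u nk

lemma rpow_three_halves_mul_le {A B : ℝ} (hA : 0 ≤ A) (hB : 0 ≤ B) :
    A ^ (3/2 : ℝ) * B ^ (3/2 : ℝ) ≤ B * (A + B) ^ 2 := by
  rw [← pow_le_pow_iff_left₀ (by positivity) (by positivity) two_ne_zero, mul_pow,
    ← rpow_natCast, ← rpow_natCast, ← rpow_mul hA, ← rpow_mul hB]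
  norm_num
  calc A ^ 3 * B ^ 3 = B ^ 2 * (A ^ 3 * B) := by ring
    _ ≤ B ^ 2 * ((A + B) ^ 3 * (A + B)) := by gcongr <;> linarith
    _ = (B * (A + B) ^ 2) ^ 2 := by ring

lemma tornheimTerm_le {s t u : ℕ} (hst : 1 ≤ s + t) (hu : 2 ≤ u) (nk : ℕ × ℕ) :
    tornheimTerm s t u nk ≤ (((nk.1:ℝ) + 1) ^ (3/2 : ℝ))⁻¹ * (((nk.2:ℝ) + 1) ^ (3/2 : ℝ))⁻¹ := by
  set A : ℝ := nk.1 + 1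
  set B : ℝ := nk.2 + 1
  have hA : 1 ≤ A := by simp [A]
  have hB : 1 ≤ B := by simp [B]
  have hAB : (nk.1:ℝ) + nk.2 + 2 = A + B := by ring
  rw [tornheimTerm, hAB, ← mul_inv, inv_le_inv₀ (by positivity) (by positivity)]
  have hu' : (A + B) ^ 2 ≤ (A + B) ^ u := pow_le_pow_right₀ (by linarith) hu
  rcases Nat.eq_zero_or_pos t with rfl | ht
  · calc A ^ (3/2 : ℝ) * B ^ (3/2 : ℝ) ≤ A * (B + A) ^ 2 := by
          rw [mul_comm]; exact rpow_three_halves_mul_le (by linarith) (by linarith)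
      _ ≤ A ^ s * B ^ 0 * (A + B) ^ u := by
          rw [add_comm B, pow_zero, mul_one]
          gcongr
          exact le_self_pow₀ hA (by omega)
  · calc A ^ (3/2 : ℝ) * B ^ (3/2 : ℝ) ≤ B * (A + B) ^ 2 :=
          rpow_three_halves_mul_le (by linarith) (by linarith)
      _ ≤ A ^ s * B ^ t * (A + B) ^ u := by
          gcongr
          calc B ≤ B ^ t := le_self_pow₀ hB ht.ne'
            _ ≤ A ^ s * B ^ t := le_mul_of_one_le_left (by positivity) (one_le_pow₀ hA)

lemma summable_inv_add_one_rpow {p : ℝ} (hp : 1 < p) :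
    Summable fun n : ℕ => (((n:ℝ) + 1) ^ p)⁻¹ := by
  simpa using (summable_nat_add_iff 1).mpr (summable_nat_rpow_inv.mpr hp)

lemma summable_tornheimTerm {s t u : ℕ} (hst : 1 ≤ s + t) (hu : 2 ≤ u) :
    Summable (tornheimTerm s t u) := by
  have h := summable_inv_add_one_rpow (p := 3/2) (by norm_num)
  refine .of_nonneg_of_le (fun _ => by rw [tornheimTerm]; positivity) (tornheimTerm_le hst hu)
    (h.mul_of_nonneg h (fun _ => by positivity) (fun _ => by positivity))

lemma tornheimTerm_succ_succ (s t u : ℕ) (nk : ℕ × ℕ) :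
    tornheimTerm (s + 1) (t + 1) u nk =
      tornheimTerm s (t + 1) (u + 1) nk + tornheimTerm (s + 1) t (u + 1) nk := by
  simp only [tornheimTerm]
  field_simp
  ring

lemma tornheim_succ_succ (s t : ℕ) {u : ℕ} (hu : 1 ≤ u) :
    tornheim (s + 1) (t + 1) u = tornheim s (t + 1) (u + 1) + tornheim (s + 1) t (u + 1) := by
  simp only [tornheim, tornheimTerm_succ_succ]
  exact (summable_tornheimTerm (by omega) (by omega)).tsum_add
    (summable_tornheimTerm (by omega) (by omega))

lemma summable_norm_pow_succ_div {x : ℝ} (hx : x ∈ Ioo (0:ℝ) 1) (p : ℕ) :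
    Summable fun n : ℕ => ‖x ^ (n + 1) / ((n:ℝ) + 1) ^ p‖ := by
  refine .of_nonneg_of_le (fun _ => norm_nonneg _) (fun n => ?_)
    ((summable_nat_add_iff 1).mpr (summable_geometric_of_lt_one hx.1.le hx.2))
  rw [norm_div, norm_pow, norm_pow, norm_of_nonneg hx.1.le,
    norm_of_nonneg (Nat.cast_add_one_pos n).le]
  exact div_le_self (pow_pos hx.1 _).le (one_le_pow₀ (by linarith [n.cast_nonneg (α := ℝ)]))

lemma Li_mul_Li {x : ℝ} (hx : x ∈ Ioo (0:ℝ) 1) (s t : ℕ) :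
    Li s x * Li t x =
      ∑' nk : ℕ × ℕ, x ^ (nk.1 + nk.2 + 2) * (((nk.1:ℝ) + 1) ^ s * ((nk.2:ℝ) + 1) ^ t)⁻¹ := by
  rw [Li, Li, tsum_mul_tsum_of_summable_norm (summable_norm_pow_succ_div hx s)
    (summable_norm_pow_succ_div hx t)]
  congr with nk
  ring

lemma Kint_eq_tornheim {r s t : ℕ} (hr : 1 ≤ r) (hst : 1 ≤ s + t) :
    Kint r s t = (-1) ^ r * r ! * tornheim s t (r + 1) := by
  set F : ℕ × ℕ → ℝ → ℝ := fun nk x =>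
    log x ^ r * x ^ (nk.1 + nk.2 + 1) * (((nk.1:ℝ) + 1) ^ s * ((nk.2:ℝ) + 1) ^ t)⁻¹
  have hF : ∀ x ∈ Ioo (0:ℝ) 1, log x ^ r * Li s x * Li t x / x = ∑' nk, F nk x := by
    intro x hx
    rw [mul_assoc, Li_mul_Li hx, ← tsum_mul_left, ← tsum_div_const]
    congr with nk
    simp only [F]
    field_simp [hx.1.ne']
    ring
  have hterm : ∀ nk : ℕ × ℕ,
      ∫ x in Ioo (0:ℝ) 1, F nk x = (-1) ^ r * r ! * tornheimTerm s t (r + 1) nk := by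
    intro nk
    simp only [F, integral_mul_const, integral_log_pow_mul_pow, tornheimTerm]
    rw [show ((nk.1 + nk.2 + 1 : ℕ) : ℝ) + 1 = nk.1 + nk.2 + 2 by push_cast; ring]
    field_simp
  have hnorm : ∀ nk : ℕ × ℕ,
      ∫ x in Ioo (0:ℝ) 1, ‖F nk x‖ = r ! * tornheimTerm s t (r + 1) nk := by
    intro nk
    rw [setIntegral_congr_fun measurableSet_Ioo (g := fun x =>
      (-log x) ^ r * x ^ (nk.1 + nk.2 + 1) * (((nk.1:ℝ) + 1) ^ s * ((nk.2:ℝ) + 1) ^ t)⁻¹)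
      fun x hx => ?_, integral_mul_const, integral_neg_log_pow_mul_pow, tornheimTerm]
    · rw [show ((nk.1 + nk.2 + 1 : ℕ) : ℝ) + 1 = nk.1 + nk.2 + 2 by push_cast; ring]
      field_simp
    · simp only [F, norm_mul, norm_pow, norm_inv, norm_of_nonneg hx.1.le,
        norm_of_nonpos (log_nonpos hx.1.le hx.2.le), norm_of_nonneg (Nat.cast_add_one_pos nk.1).le,
        norm_of_nonneg (Nat.cast_add_one_pos nk.2).le]
  have hint : ∀ nk, IntegrableOn (F nk) (Ioo 0 1) := fun nk =>
    (integrableOn_log_pow_mul_pow r _).mul_const _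
  rw [Kint, intervalIntegral.integral_of_le zero_le_one, integral_Ioc_eq_integral_Ioo,
    setIntegral_congr_fun measurableSet_Ioo hF, ← integral_tsum_of_summable_integral_norm hint,
    tsum_congr hterm, tsum_mul_left, tornheim]
  simpa only [hnorm] using (summable_tornheimTerm hst (by omega)).mul_left (r ! : ℝ)

lemma Finset.sum_Icc_one_eq_sum_range {M : Type*} [AddCommMonoid M] (f : ℕ → M) (n : ℕ) :
    ∑ i ∈ Finset.Icc 1 n, f i = ∑ i ∈ Finset.range n, f (i + 1) := by
  rw [← Finset.Ico_add_one_right_eq_Icc, Finset.sum_Ico_eq_sum_range]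
  simp [add_comm]

noncomputable def nestSum : ℕ → ℕ → ℕ → (ℕ → ℝ) → ℝ
  | 0, _, c, f => f c
  | y + 1, b, c, f => ∑ i ∈ Finset.Icc 1 b, nestSum y (b - i + 1) (c + i) f

section Pascal

variable {E : ℕ → ℕ → ℕ → ℝ}
  (hE : ∀ c s t, E c (s + 1) (t + 1) = E (c + 1) s (t + 1) + E (c + 1) (s + 1) t)
include hE

lemma pascal_unfold_left (p : ℕ) : ∀ c t,
    E c p (t + 1) = E (c + p) 0 (t + 1) + ∑ i ∈ Finset.Icc 1 p, E (c + i) (p - i + 1) t := by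
  induction p with
  | zero => simp
  | succ p ih =>
    intro c t
    rw [hE, ih, Finset.sum_Icc_one_eq_sum_range, Finset.sum_Icc_one_eq_sum_range,
      Finset.sum_range_succ']
    simp only [Nat.add_sub_add_right, zero_add, Nat.add_sub_cancel]
    ring_nf

lemma pascal_unfold (q : ℕ) : ∀ p c,
    E c p q = ∑ x ∈ Finset.range q, cnt19 x p * E (c + p + x) 0 (q - x)
      + nestSum q p c (fun c' => E c' (p + q + c - c') 0) := by
  induction q with
  | zero => simp [nestSum]
  | succ q ih =>
    intro p c
    have hsplit : ∀ i ∈ Finset.Icc 1 p, E (c + i) (p - i + 1) q =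
        ∑ x ∈ Finset.range q, cnt19 x (p - i + 1) * E (c + p + (x + 1)) 0 (q - x)
          + nestSum q (p - i + 1) (c + i) (fun c' => E c' (p + (q + 1) + c - c') 0) := by
      intro i hi
      obtain ⟨hi1, hip⟩ := Finset.mem_Icc.mp hi
      rw [ih, show c + i + (p - i + 1) = c + p + 1 by omega,
        show p - i + 1 + q + (c + i) = p + (q + 1) + c by omega]
      simp only [add_assoc, add_comm 1]
    rw [pascal_unfold_left hE, Finset.sum_congr rfl hsplit, Finset.sum_add_distrib,
      Finset.sum_comm, Finset.sum_range_succ']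
    simp only [cnt19, Nat.cast_sum, Finset.sum_mul, Nat.add_sub_add_right, add_zero,
      Nat.sub_zero, Nat.cast_one, one_mul, nestSum]
    ring

end Pascal

lemma factorial_mul_poch (c k : ℕ) : (c ! : ℝ) * poch (c + 1) k = (c + k)! := by
  rw [poch, ← Nat.factorial_mul_ascFactorial, Nat.ascFactorial_eq_prod_range]
  push_cast
  ring

lemma neg_one_pow_div_poch_mul (c k : ℕ) :
    (-1) ^ k / poch (c + 1) k * ((-1) ^ (c + k) * (c + k)!) = (-1) ^ c * c ! := by
  have hpoch : poch (c + 1) k ≠ 0 :=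
    right_ne_zero_of_mul (by rw [factorial_mul_poch]; positivity)
  rw [← factorial_mul_poch, pow_add]
  field_simp
  rw [← pow_mul, mul_comm, pow_mul]
  norm_num

lemma nest19_eq_nestSum {f g : ℕ → ℝ} (y : ℕ) : ∀ b c, 1 ≤ b →
    (∀ c' ∈ Finset.Ico c (c + b + y), f c' = (-1) ^ c' * c' ! * g c') →
    nest19 y b c f = (-1) ^ c * c ! * nestSum y b c g := by
  induction y with
  | zero =>
    intro b c hb hfg
    exact hfg c (by simp; omega)
  | succ y ih =>
    intro b c _ hfg
    rw [nest19, nestSum, Finset.mul_sum]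
    refine Finset.sum_congr rfl fun i hi => ?_
    obtain ⟨hi1, hib⟩ := Finset.mem_Icc.mp hi
    rw [ih (b - i + 1) (c + i) (by omega) fun c' hc' => hfg c' (by simp at hc' ⊢; omega),
      ← mul_assoc, neg_one_pow_div_poch_mul]

theorem stmt19_general (p q m : ℕ) (hp : 1 ≤ p) (hm : 1 ≤ m) :
    Kint m p q =
      (∑ x ∈ Finset.Icc 1 q,
        Kint (m + p + x - 1) 0 (q - x + 1)
          * ((-1 : ℝ) ^ (p + x - 1) / poch ((m : ℝ) + 1) (p + x - 1)) * (cnt19 (x - 1) p : ℝ))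
      + nest19 q p m (fun c => Kint c (p + q + m - c) 0) := by
  have hK := pascal_unfold (E := fun c s t => tornheim s t (c + 1))
    (fun c s t => tornheim_succ_succ s t (Nat.le_add_left 1 c)) q p m
  rw [Kint_eq_tornheim hm (by omega), hK, mul_add, Finset.mul_sum,
    Finset.sum_Icc_one_eq_sum_range, nest19_eq_nestSum q p m hp fun c hc => ?_]
  · congr 1
    refine Finset.sum_congr rfl fun x hx => ?_
    have hxq := Finset.mem_range.mp hx
    rw [Nat.add_sub_cancel, show p + (x + 1) - 1 = p + x by omega,
      show m + p + (x + 1) - 1 = m + p + x by omega,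
      show q - (x + 1) + 1 = q - x by omega, Kint_eq_tornheim (by omega) (by omega)]
    have hweight := neg_one_pow_div_poch_mul m (p + x)
    rw [← add_assoc] at hweight
    linear_combination -(cnt19 x p * tornheim 0 (q - x) (m + p + x + 1)) * hweight
  · obtain ⟨hmc, hcq⟩ := Finset.mem_Ico.mp hc
    exact Kint_eq_tornheim (by omega) (by omega)

theorem stmt19 (p q m : ℕ) (hp : 1 ≤ p) (hq : 1 ≤ q) (hm : 1 ≤ m) (hpq : q ≤ p) :
    Kint m p q =
      (∑ x ∈ Finset.Icc 1 q,
        Kint (m + p + x - 1) 0 (q - x + 1)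
          * ((-1 : ℝ) ^ (p + x - 1) / poch ((m : ℝ) + 1) (p + x - 1)) * (cnt19 (x - 1) p : ℝ))
      + nest19 q p m (fun c => Kint c (p + q + m - c) 0) :=
  stmt19_general p q m hp hm
end
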